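/- Let A be a finite-dimensional C*-algebra and J ⊆ A a self-adjoint subspace, and let J̃ = [I_A] ∨ (J^T)^⊥ be the subspace spanned by I_A + (J^T)^⊥. Then: (i) for any state ρ ∈ J, (I_A + (J^T)^⊥) ∩ A⁺ = J̃ ∩ S_{ρ^T}(A); (ii) if I_A ∈ J, then the double tilde satisfies (J̃)̃ = J; (iii) if J = S⁻¹(J₀) for a channel S : A → A₀ and a self-adjoint subspace J₀ ⊆ A₀, then J̃ = (S^T)*(J̃₀). -/

import Mathlib

open scoped BigOperators Pointwise

namespace GenCh

/-- A finite-dimensional C*-algebra `⊕ⱼ B(Hⱼ)`, represented as the algebra of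
block-diagonal operators: an element assigns to each block index `i` a matrix
acting on the (finite-dimensional) Hilbert space with orthonormal basis `d i`. -/
abbrev PiMat (ι : Type) (d : ι → Type) : Type := ∀ i, Matrix (d i) (d i) ℂ

variable {ι : Type} [Fintype ι] [DecidableEq ι] {d : ι → Type}
  [∀ i, Fintype (d i)] [∀ i, DecidableEq (d i)]
variable {κ : Type} [Fintype κ] [DecidableEq κ] {e : κ → Type}
  [∀ j, Fintype (e j)] [∀ j, DecidableEq (e j)]

/-- A positive element of a (finite-dimensional) C*-algebra: `a = b* b`. -/
def IsPosEl {A : Type} [NonUnitalSemiring A] [StarRing A] (a : A) : Prop :=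
  ∃ b, a = star b * b

/-- The (un-normalized) trace `Tr` on `⊕ⱼ B(Hⱼ)`. -/
noncomputable def trL : PiMat ι d →ₗ[ℂ] ℂ where
  toFun a := ∑ i, (a i).trace
  map_add' a b := by simp [Matrix.trace_add, Finset.sum_add_distrib]
  map_smul' c a := by simp [Matrix.trace_smul, Finset.mul_sum, smul_eq_mul]

/-- Complete positivity of a linear map between (finite-dimensional) C*-algebras:
for every `n`, the induced map on `n × n` matrices (i.e. `id_{B(ℂⁿ)} ⊗ Φ`)
preserves positivity. -/
def IsCP {A B : Type} [NonUnitalSemiring A] [StarRing A] [Module ℂ A]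
    [NonUnitalSemiring B] [StarRing B] [Module ℂ B] (Φ : A →ₗ[ℂ] B) : Prop :=
  ∀ (n : ℕ) (M : Matrix (Fin n) (Fin n) A), IsPosEl M → IsPosEl (M.map Φ)

/-- Complete positivity of a linear map defined on a linear subspace `J ⊆ A`:
for every `n`, the entrywise application (i.e. `id_{B(ℂⁿ)} ⊗ Ξ`) maps matrices with
entries in `J` that are positive in `Mₙ(A)` to positive elements of `Mₙ(B)`. -/
def IsCPOn {A B : Type} [NonUnitalSemiring A] [StarRing A] [Module ℂ A]
    [NonUnitalSemiring B] [StarRing B] [Module ℂ B]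
    (J : Submodule ℂ A) (Ξ : J →ₗ[ℂ] B) : Prop :=
  ∀ (n : ℕ) (M : Matrix (Fin n) (Fin n) J),
    IsPosEl (M.map (fun x => (x : A))) → IsPosEl (M.map (fun x => Ξ x))

/-- The state space `S(A)`: positive elements of trace one. -/
def stateSet (ι : Type) [Fintype ι] [DecidableEq ι] (d : ι → Type)
    [∀ i, Fintype (d i)] [∀ i, DecidableEq (d i)] : Set (PiMat ι d) :=
  {a | IsPosEl a ∧ trL a = 1}

/-- `K` is a section of the state space: `K = [K] ∩ S(A)`. -/
def IsSection (K : Set (PiMat ι d)) : Prop :=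
  K = (Submodule.span ℂ K : Set (PiMat ι d)) ∩ stateSet ι d

/-- The transpose `a ↦ aᵀ` (blockwise). -/
def pT (a : PiMat ι d) : PiMat ι d := fun i => (a i).transpose

/-- The transpose as a linear map. -/
noncomputable def pTL : PiMat ι d →ₗ[ℂ] PiMat ι d where
  toFun := pT
  map_add' a b := by funext i; simp [pT]
  map_smul' c a := by funext i; simp [pT]

/-- The Hilbert–Schmidt inner product `⟨a,b⟩ = Tr(a* b)`. -/
noncomputable def hsIP (a b : PiMat ι d) : ℂ := trL (star a * b)

/-- The orthogonal complement `S^⊥` of a subset w.r.t. the Hilbert-Schmidt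
inner product, as a (complex-linear) subspace. -/
noncomputable def orthSet (S : Set (PiMat ι d)) : Submodule ℂ (PiMat ι d) where
  carrier := {x | ∀ a ∈ S, trL (star a * x) = 0}
  zero_mem' := by intro a _; simp
  add_mem' := by
    intro x y hx hy a ha
    rw [mul_add, map_add, hx a ha, hy a ha, add_zero]
  smul_mem' := by
    intro c x hx a ha
    rw [mul_smul_comm, map_smul, hx a ha, smul_zero]

/-- The embedding of `a ⊗ b` into the tensor product algebra
`(⊕ᵢ B(Hᵢ)) ⊗ (⊕ⱼ B(Kⱼ)) = ⊕_{i,j} B(Hᵢ ⊗ Kⱼ)`, realized via Kronecker products. -/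
noncomputable def otimes (a : PiMat ι d) (b : PiMat κ e) :
    PiMat (ι × κ) (fun p => d p.1 × e p.2) :=
  fun p => Matrix.kroneckerMap (· * ·) (a p.1) (b p.2)

/-- The tensor product `V ⊗ W` of two subsets as a subspace of the tensor
product algebra: the span of elementary tensors. -/
noncomputable def tensSub (V : Set (PiMat κ e)) (W : Set (PiMat ι d)) :
    Submodule ℂ (PiMat (κ × ι) (fun p => e p.1 × d p.2)) :=
  Submodule.span ℂ {x | ∃ b ∈ V, ∃ w ∈ W, x = otimes b w}

/-- The Choi matrix `X_Φ ∈ B ⊗ A` of a linear map `Φ : A → B`,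
defined blockwise via `X_{Φ_ij} = (Φ_ij ⊗ id)(Ψ_{H_i})`. -/
noncomputable def choi (Φ : PiMat ι d →ₗ[ℂ] PiMat κ e) :
    PiMat (κ × ι) (fun p => e p.1 × d p.2) :=
  fun p x y => Φ (Pi.single p.2 (Matrix.single x.2 y.2 1)) p.1 x.1 y.1

/-- The partial trace `Tr_B : B ⊗ A → A` over the first (output) factor. -/
noncomputable def ptrFst (X : PiMat (κ × ι) (fun p => e p.1 × d p.2)) : PiMat ι d :=
  fun i a b => ∑ j : κ, ∑ k : e j, X (j, i) (k, a) (k, b)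

/-- The map `A → B` associated to a matrix `X ∈ B ⊗ A` via
`T_X(a) = Tr_A[(I_B ⊗ aᵀ) X]`. -/
noncomputable def applyChoi (X : PiMat (κ × ι) (fun p => e p.1 × d p.2)) (a : PiMat ι d) :
    PiMat κ e :=
  fun j u v => ∑ i : ι, ∑ m : d i, ∑ x : d i, (a i) m x * X (j, i) (u, m) (v, x)

/-- A channel: a completely positive trace-preserving linear map. -/
def IsChannel (Φ : PiMat ι d →ₗ[ℂ] PiMat κ e) : Prop :=
  IsCP Φ ∧ ∀ a, trL (Φ a) = trL a

/-- For a self-adjoint subspace `J`, the subspace `J̃ = [I_A] ∨ (Jᵀ)^⊥` spanned by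
`I_A + (Jᵀ)^⊥`. -/
noncomputable def tilde (J : Submodule ℂ (PiMat ι d)) : Submodule ℂ (PiMat ι d) :=
  Submodule.span ℂ {(1 : PiMat ι d)} ⊔ orthSet (pT '' (J : Set (PiMat ι d)))

end GenCh

/-! Under the Hilbert–Schmidt inner product the transpose is a self-adjoint involution, so
`(Jᵀ)^⊥ = (J^⊥)ᵀ` and `J̃ = [I] ⊔ (J^⊥)ᵀ`.
(i) The functional `x ↦ Tr(ρᵀ x)` vanishes on `(Jᵀ)^⊥` and is `1` at `I`, so on `J̃` it reads off
the coefficient of `I`.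
(ii) Taking complements twice, `J̃̃ = [I] ⊔ ([I]^⊥ ⊓ J)`, which is `J` by the modular law once
`I ∈ J`.
(iii) `(S⁻¹ J₀)^⊥ = S*(J₀^⊥)`, and `(Sᵀ)*` fixes `I` because `S` preserves the trace. -/

section General

theorem Submodule.sub_mem_iff_mem_span_singleton_sup {R M : Type*} [CommRing R]
    [AddCommGroup M] [Module R M] {K : Submodule R M} {f : M →ₗ[R] R} {u x : M}
    (hfK : ∀ k ∈ K, f k = 0) (hfu : f u = 1) :
    x - u ∈ K ↔ x ∈ Submodule.span R {u} ⊔ K ∧ f x = 1 := by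
  constructor
  · intro hx
    refine ⟨Submodule.mem_sup.2 ⟨u, Submodule.mem_span_singleton_self u, x - u, hx,
      add_sub_cancel u x⟩, ?_⟩
    rw [← sub_eq_zero, ← hfu, ← map_sub]
    exact hfK _ hx
  · rintro ⟨hx, hfx⟩
    obtain ⟨y, hy, k, hk, rfl⟩ := Submodule.mem_sup.1 hx
    obtain ⟨c, rfl⟩ := Submodule.mem_span_singleton.1 hy
    have hc : c = 1 := by simpa [hfK k hk, hfu] using hfx
    simpa [hc] using hk

theorem Submodule.map_eq_comap_of_involutive {R M : Type*} [Semiring R] [AddCommMonoid M]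
    [Module R M] {τ : M →ₗ[R] M} (hτ : Function.Involutive τ) (N : Submodule R M) :
    N.map τ = N.comap τ :=
  Submodule.map_equiv_eq_comap_symm (LinearEquiv.ofInvolutive τ hτ) N

theorem Submodule.map_map_of_involutive {R M : Type*} [Semiring R] [AddCommMonoid M]
    [Module R M] {τ : M →ₗ[R] M} (hτ : Function.Involutive τ) (N : Submodule R M) :
    (N.map τ).map τ = N := by
  rw [map_eq_comap_of_involutive hτ (N.map τ), Submodule.comap_map_eq_of_injective hτ.injective]

variable {𝕜 E F : Type*} [RCLike 𝕜] [NormedAddCommGroup E] [InnerProductSpace 𝕜 E]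
  [FiniteDimensional 𝕜 E] [NormedAddCommGroup F] [InnerProductSpace 𝕜 F] [FiniteDimensional 𝕜 F]

theorem Submodule.orthogonal_comap_eq_map_adjoint (T : E →ₗ[𝕜] F) (M : Submodule 𝕜 F) :
    (M.comap T)ᗮ = (Mᗮ).map T.adjoint := by
  suffices h : ((Mᗮ).map T.adjoint)ᗮ = M.comap T by
    rw [← h, Submodule.orthogonal_orthogonal]
  ext x
  conv_rhs => rw [Submodule.mem_comap, ← M.orthogonal_orthogonal]
  simp only [Submodule.mem_orthogonal, Submodule.mem_map, forall_exists_index, and_imp,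
    forall_apply_eq_imp_iff₂, LinearMap.adjoint_inner_left]

variable {τ : E →ₗ[𝕜] E}

theorem Submodule.map_orthogonal_of_involutive (hτ : Function.Involutive τ)
    (hadj : τ.adjoint = τ) (M : Submodule 𝕜 E) : (Mᗮ).map τ = (M.map τ)ᗮ := by
  rw [M.map_eq_comap_of_involutive hτ, Submodule.orthogonal_comap_eq_map_adjoint, hadj]

theorem Submodule.sup_map_orthogonal_sup_map_orthogonal (hτ : Function.Involutive τ)
    (hadj : τ.adjoint = τ) {K J : Submodule 𝕜 E} (hKJ : K ≤ J) (hK : K.map τ = K) :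
    K ⊔ ((K ⊔ (Jᗮ).map τ)ᗮ).map τ = J := by
  rw [← Submodule.inf_orthogonal, map_orthogonal_of_involutive hτ hadj,
    Submodule.orthogonal_orthogonal, Submodule.map_inf _ hτ.injective,
    map_map_of_involutive hτ, map_orthogonal_of_involutive hτ hadj, hK]
  exact Submodule.sup_orthogonal_inf_of_hasOrthogonalProjection hKJ

end General

namespace GenCh

theorem IsPosEl.isSelfAdjoint {A : Type} [NonUnitalSemiring A] [StarRing A] {a : A}
    (ha : IsPosEl a) : IsSelfAdjoint a := by
  obtain ⟨b, rfl⟩ := ha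
  exact IsSelfAdjoint.star_mul_self b

section Transpose

variable {ι : Type} {d : ι → Type}

theorem pT_pT (a : PiMat ι d) : pT (pT a) = a := rfl

theorem pTL_apply (a : PiMat ι d) : pTL a = pT a := rfl

theorem pTL_involutive : Function.Involutive (pTL : PiMat ι d →ₗ[ℂ] PiMat ι d) := pT_pT

theorem star_pT (a : PiMat ι d) : star (pT a) = pT (star a) :=
  funext fun i => (Matrix.transpose_conjTranspose (a i)).symm

theorem pT_one [∀ i, DecidableEq (d i)] : pT (1 : PiMat ι d) = 1 :=
  funext fun _ => Matrix.transpose_one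

end Transpose

section HilbertSchmidt

variable {ι : Type} [Fintype ι] {d : ι → Type} [∀ i, Fintype (d i)]
  {κ : Type} [Fintype κ] {e : κ → Type} [∀ j, Fintype (e j)]

theorem trL_apply (a : PiMat ι d) : trL a = ∑ i, (a i).trace := rfl

theorem trL_star (a : PiMat ι d) : trL (star a) = starRingEnd ℂ (trL a) := by
  simp only [trL_apply, map_sum]
  exact Finset.sum_congr rfl fun i _ => Matrix.trace_conjTranspose (a i)

theorem trL_pT (a : PiMat ι d) : trL (pT a) = trL a :=
  Finset.sum_congr rfl fun i _ => Matrix.trace_transpose (a i)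

section ComplexOrder

open scoped ComplexOrder

theorem trL_star_mul_self_nonneg (a : PiMat ι d) : 0 ≤ trL (star a * a) :=
  Finset.sum_nonneg fun i _ => (Matrix.posSemidef_conjTranspose_mul_self (a i)).trace_nonneg

theorem trL_star_mul_self_eq_zero_iff {a : PiMat ι d} : trL (star a * a) = 0 ↔ a = 0 :=
  (Finset.sum_eq_zero_iff_of_nonneg fun i _ =>
    (Matrix.posSemidef_conjTranspose_mul_self (a i)).trace_nonneg).trans <|
    (forall_congr' fun i => by
      simpa using Matrix.trace_conjTranspose_mul_self_eq_zero_iff (A := a i)).trans funext_iff.symm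

end ComplexOrder

/-- The topology of the resulting norm is not definitionally the product topology of
`PiMat ι d`; the latter is never used below. -/
noncomputable abbrev hsCore : InnerProductSpace.Core ℂ (PiMat ι d) where
  inner a b := trL (star a * b)
  conj_inner_symm a b := by
    simp only [← trL_star, star_mul, star_star]
  re_inner_nonneg a := (RCLike.nonneg_iff.1 (trL_star_mul_self_nonneg a)).1
  add_left a b c := by simp only [star_add, add_mul, map_add]
  smul_left a b c := by simp only [star_smul, smul_mul_assoc, map_smul]; rfl
  definite _ := trL_star_mul_self_eq_zero_iff.1

noncomputable instance : NormedAddCommGroup (PiMat ι d) := hsCore.toNormedAddCommGroup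

noncomputable instance : InnerProductSpace ℂ (PiMat ι d) := .ofCore hsCore.toCore

theorem inner_eq_trL (a b : PiMat ι d) : inner ℂ a b = trL (star a * b) := rfl

theorem hsIP_eq_inner (a b : PiMat ι d) : hsIP a b = inner ℂ a b := rfl

theorem inner_pT_left (a b : PiMat ι d) : inner ℂ (pT a) b = inner ℂ a (pT b) := by
  simp only [inner_eq_trL, star_pT, trL_apply]
  refine Finset.sum_congr rfl fun i _ => ?_
  rw [← Matrix.trace_transpose, Pi.mul_apply, Matrix.transpose_mul]
  exact Matrix.trace_mul_comm _ _

theorem adjoint_pTL : (pTL : PiMat ι d →ₗ[ℂ] PiMat ι d).adjoint = pTL :=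
  LinearMap.IsSymmetric.adjoint_eq inner_pT_left

theorem eq_adjoint_of_hsIP {S : PiMat ι d →ₗ[ℂ] PiMat κ e} {G : PiMat κ e →ₗ[ℂ] PiMat ι d}
    (hG : ∀ a b, hsIP (pT (S (pT a))) b = hsIP a (G b)) : G = (pTL ∘ₗ S ∘ₗ pTL).adjoint := by
  have hST : pTL ∘ₗ S ∘ₗ pTL = G.adjoint := (LinearMap.eq_adjoint_iff _ G).2 fun a b => by
    simpa only [← hsIP_eq_inner, LinearMap.comp_apply, pTL_apply] using hG a b
  rw [hST, LinearMap.adjoint_adjoint]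

variable [∀ i, DecidableEq (d i)] [∀ j, DecidableEq (e j)]

theorem inner_one_right (a : PiMat ι d) : inner ℂ a 1 = starRingEnd ℂ (trL a) := by
  rw [inner_eq_trL, mul_one, trL_star]

theorem orthSet_coe (M : Submodule ℂ (PiMat ι d)) : orthSet (M : Set (PiMat ι d)) = Mᗮ := rfl

theorem tilde_eq (J : Submodule ℂ (PiMat ι d)) :
    tilde J = Submodule.span ℂ {1} ⊔ (Jᗮ).map pTL := by
  rw [Submodule.map_orthogonal_of_involutive pTL_involutive adjoint_pTL, ← orthSet_coe,
    Submodule.map_coe]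
  rfl

theorem sub_one_mem_orthSet_iff {J : Submodule ℂ (PiMat ι d)} {ρ x : PiMat ι d} (hρJ : ρ ∈ J)
    (hρ : IsSelfAdjoint ρ) (hρ1 : trL ρ = 1) :
    x - 1 ∈ orthSet (pT '' (J : Set (PiMat ι d))) ↔ x ∈ tilde J ∧ trL (pT ρ * x) = 1 := by
  refine Submodule.sub_mem_iff_mem_span_singleton_sup
    (f := trL ∘ₗ LinearMap.mulLeft ℂ (pT ρ)) (fun k hk => ?_) (by simpa [trL_pT] using hρ1)
  simpa [star_pT, hρ.star_eq] using hk (pT ρ) ⟨ρ, hρJ, rfl⟩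

theorem tilde_tilde {J : Submodule ℂ (PiMat ι d)} (h1 : 1 ∈ J) : tilde (tilde J) = J := by
  rw [tilde_eq, tilde_eq]
  refine Submodule.sup_map_orthogonal_sup_map_orthogonal pTL_involutive adjoint_pTL
    ((Submodule.span_singleton_le_iff_mem _ _).2 h1) ?_
  rw [Submodule.map_span, Set.image_singleton]
  exact congrArg (fun u => Submodule.span ℂ {u}) pT_one

theorem adjoint_apply_one {Φ : PiMat ι d →ₗ[ℂ] PiMat κ e} (hΦ : ∀ a, trL (Φ a) = trL a) :
    Φ.adjoint 1 = 1 :=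
  ext_inner_left ℂ fun a => by
    rw [LinearMap.adjoint_inner_right, inner_one_right, inner_one_right, hΦ]

theorem tilde_comap {S : PiMat ι d →ₗ[ℂ] PiMat κ e} (hS : ∀ a, trL (S a) = trL a)
    (J₀ : Submodule ℂ (PiMat κ e)) :
    tilde (J₀.comap S) = (tilde J₀).map (pTL ∘ₗ S ∘ₗ pTL).adjoint := by
  have hST : ∀ a, trL ((pTL ∘ₗ S ∘ₗ pTL) a) = trL a := fun a =>
    (trL_pT _).trans ((hS _).trans (trL_pT a))
  rw [tilde_eq, tilde_eq, Submodule.map_sup, Submodule.map_span, Set.image_singleton,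
    adjoint_apply_one hST, LinearMap.adjoint_comp, LinearMap.adjoint_comp, adjoint_pTL,
    adjoint_pTL, Submodule.map_comp, Submodule.map_comp, Submodule.map_map_of_involutive
    pTL_involutive, Submodule.orthogonal_comap_eq_map_adjoint]

end HilbertSchmidt

theorem tilde_properties_general
    {ι : Type} [Fintype ι] {d : ι → Type}
    [∀ i, Fintype (d i)] [∀ i, DecidableEq (d i)]
    {κ : Type} [Fintype κ] {e : κ → Type}
    [∀ j, Fintype (e j)] [∀ j, DecidableEq (e j)]
    (J : Submodule ℂ (PiMat ι d))
    (ρ : PiMat ι d)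
    (S : PiMat ι d →ₗ[ℂ] PiMat κ e) (J₀ : Submodule ℂ (PiMat κ e))
    (G : PiMat κ e →ₗ[ℂ] PiMat ι d) :
    -- (i)
    ((ρ ∈ J ∧ IsPosEl ρ ∧ trL ρ = 1) →
      {x : PiMat ι d | x - 1 ∈ orthSet (pT '' (J : Set (PiMat ι d)))} ∩ {x | IsPosEl x} =
        (tilde J : Set (PiMat ι d)) ∩ {x | IsPosEl x ∧ trL (pT ρ * x) = 1}) ∧
    -- (ii)
    ((1 : PiMat ι d) ∈ J → tilde (tilde J) = J) ∧
    -- (iii)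
    (IsChannel S → (∀ b ∈ J₀, star b ∈ J₀) →
      (∀ (a : PiMat ι d) (b : PiMat κ e), hsIP (pT (S (pT a))) b = hsIP a (G b)) →
      J = Submodule.comap S J₀ →
      tilde J = Submodule.map G (tilde J₀)) := by
  refine ⟨fun ⟨hρJ, hρpos, hρ1⟩ => ?_, tilde_tilde, fun hS _ hG hJ => ?_⟩
  · ext x
    simp only [Set.mem_inter_iff, Set.mem_ofPred_eq, SetLike.mem_coe,
      sub_one_mem_orthSet_iff hρJ hρpos.isSelfAdjoint hρ1]
    tauto
  · rw [hJ, eq_adjoint_of_hsIP hG, tilde_comap hS.2]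

/-- properties of `J̃ = [I_A] ∨ (Jᵀ)^⊥`.
(i) For any state `ρ ∈ J`: `(I_A + (Jᵀ)^⊥) ∩ A⁺ = J̃ ∩ S_{ρᵀ}(A)`.
(ii) If `I_A ∈ J` then `(J̃)̃ = J`.
(iii) If `J = S⁻¹(J₀)` for a channel `S` and a self-adjoint subspace `J₀`, and
`G = (Sᵀ)*` is the Hilbert–Schmidt adjoint of `Sᵀ : a ↦ (S(aᵀ))ᵀ`, then
`J̃ = (Sᵀ)*(J̃₀)`. -/
theorem tilde_properties
    {ι : Type} [Fintype ι] [DecidableEq ι] {d : ι → Type}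
    [∀ i, Fintype (d i)] [∀ i, DecidableEq (d i)]
    {κ : Type} [Fintype κ] [DecidableEq κ] {e : κ → Type}
    [∀ j, Fintype (e j)] [∀ j, DecidableEq (e j)]
    (J : Submodule ℂ (PiMat ι d)) (hsa : ∀ a ∈ J, star a ∈ J)
    (ρ : PiMat ι d)
    (S : PiMat ι d →ₗ[ℂ] PiMat κ e) (J₀ : Submodule ℂ (PiMat κ e))
    (G : PiMat κ e →ₗ[ℂ] PiMat ι d) :
    -- (i)
    ((ρ ∈ J ∧ IsPosEl ρ ∧ trL ρ = 1) →
      {x : PiMat ι d | x - 1 ∈ orthSet (pT '' (J : Set (PiMat ι d)))} ∩ {x | IsPosEl x} =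
        (tilde J : Set (PiMat ι d)) ∩ {x | IsPosEl x ∧ trL (pT ρ * x) = 1}) ∧
    -- (ii)
    ((1 : PiMat ι d) ∈ J → tilde (tilde J) = J) ∧
    -- (iii)
    (IsChannel S → (∀ b ∈ J₀, star b ∈ J₀) →
      (∀ (a : PiMat ι d) (b : PiMat κ e), hsIP (pT (S (pT a))) b = hsIP a (G b)) →
      J = Submodule.comap S J₀ →
      tilde J = Submodule.map G (tilde J₀)) :=
  tilde_properties_general J ρ S J₀ G

end GenCh
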